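/- arXiv:2402.16520 — 4 statements merged into one kernel-verified Lean document; each statement's English description precedes it below -/
import Mathlib

section
/- Let Σ_tot = C ⊗ U_N + Σ_obs ⊗ I_N with C symmetric positive semi-definite and Σ_obs symmetric positive definite (both d×d). Then det(Σ_tot) = det(Σ_obs)^{N-1} · det(N·C + Σ_obs). -/
open Matrix Kronecker

/-- `det (C ⊗ U_N + Σ_obs ⊗ I_N) = det(Σ_obs)^(N-1) * det (N • C + Σ_obs)`
for `C` symmetric PSD and `Σ_obs` symmetric PD. -/
theorem det_totCov {d N : ℕ} (hN : 1 ≤ N)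
    (C S : Matrix (Fin d) (Fin d) ℝ) (hC : C.PosSemidef) (hS : S.PosDef) :
    (C ⊗ₖ (Matrix.of fun _ _ => (1 : ℝ) : Matrix (Fin N) (Fin N) ℝ)
      + S ⊗ₖ (1 : Matrix (Fin N) (Fin N) ℝ)).det
      = S.det ^ (N - 1) * ((N : ℝ) • C + S).det := by
  have hSdet : IsUnit S.det := isUnit_iff_ne_zero.mpr (ne_of_gt hS.det_pos)
  set e : Matrix (Fin N) (Fin 1) ℝ := Matrix.of fun _ _ => 1 with he
  set et : Matrix (Fin 1) (Fin N) ℝ := Matrix.of fun _ _ => 1 with het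
  have hU : (Matrix.of fun _ _ => (1 : ℝ) : Matrix (Fin N) (Fin N) ℝ) = e * et := by
    ext i j; simp [Matrix.mul_apply, he, het]
  have hete : et * e = (N : ℝ) • (1 : Matrix (Fin 1) (Fin 1) ℝ) := by
    ext i j
    simp [Matrix.mul_apply, het, he, Matrix.one_apply, Subsingleton.elim i j]
  set M : Matrix (Fin d × Fin N) (Fin d × Fin N) ℝ := S ⊗ₖ (1 : Matrix (Fin N) (Fin N) ℝ) with hM
  have hMdet : M.det = S.det ^ N := by
    rw [hM, det_kronecker]; simp
  have hMunit : IsUnit M.det := by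
    rw [hMdet]; exact hSdet.pow N
  set P : Matrix (Fin d × Fin N) (Fin d × Fin 1) ℝ := C ⊗ₖ e with hP
  set Q : Matrix (Fin d × Fin 1) (Fin d × Fin N) ℝ := (1 : Matrix (Fin d) (Fin d) ℝ) ⊗ₖ et with hQ
  have hPQ : C ⊗ₖ (Matrix.of fun _ _ => (1 : ℝ) : Matrix (Fin N) (Fin N) ℝ) = P * Q := by
    rw [hP, hQ, ← Matrix.mul_kronecker_mul, Matrix.mul_one, ← hU]
  have hsplit : C ⊗ₖ (Matrix.of fun _ _ => (1 : ℝ) : Matrix (Fin N) (Fin N) ℝ)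
      + S ⊗ₖ (1 : Matrix (Fin N) (Fin N) ℝ) = M * (1 + M⁻¹ * P * Q) := by
    rw [Matrix.mul_add, Matrix.mul_one, Matrix.mul_assoc, ← Matrix.mul_assoc M M⁻¹,
      Matrix.mul_nonsing_inv _ hMunit, Matrix.one_mul, hPQ, add_comm]
  have hMinvP : M⁻¹ * P = (S⁻¹ * C) ⊗ₖ e := by
    rw [hM, hP, Matrix.inv_kronecker, inv_one, ← Matrix.mul_kronecker_mul, Matrix.one_mul]
  have hQMP : Q * (M⁻¹ * P) = ((N : ℝ) • (S⁻¹ * C)) ⊗ₖ (1 : Matrix (Fin 1) (Fin 1) ℝ) := by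
    rw [hMinvP, hQ, ← Matrix.mul_kronecker_mul, Matrix.one_mul, hete, Matrix.kronecker_smul,
      Matrix.smul_kronecker]
  have hdet2 : (1 + Q * (M⁻¹ * P)).det = (1 + (N : ℝ) • (S⁻¹ * C)).det := by
    rw [hQMP, ← Matrix.one_kronecker_one, ← Matrix.add_kronecker, det_kronecker]
    simp
  rw [hsplit, Matrix.det_mul, hMdet, Matrix.det_one_add_mul_comm (M⁻¹ * P) Q, hdet2]
  have hNpow : S.det ^ N = S.det ^ (N - 1) * S.det := by
    conv_lhs => rw [← Nat.sub_add_cancel hN, pow_succ]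
  rw [hNpow, mul_assoc, ← Matrix.det_mul, Matrix.mul_add, Matrix.mul_one, Matrix.mul_smul,
    Matrix.mul_nonsing_inv_cancel_left _ _ hSdet, add_comm]
end

section
/- Let m be the N-fold repetition (m_0, ..., m_0) ∈ ℝ^{Nd} of a vector m_0 ∈ ℝ^d, and let Σ_tot = C ⊗ U_N + Σ_obs ⊗ I_N with C symmetric positive semi-definite and Σ_obs symmetric positive definite. For observations y = (y^{(1)},...,y^{(N)}) ∈ ℝ^{Nd} with mean ȳ = (1/N)Σ_k y^{(k)}, we have (y-m)^T Σ_tot^{-1}(y-m) = (ȳ - m_0)^T (C + Σ_obs/N)^{-1} (ȳ - m_0) + Σ_{k=1}^N (y^{(k)} - ȳ)^T Σ_obs^{-1}(y^{(k)} - ȳ). -/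
open Matrix Kronecker

/-- With `m` the `N`-fold repetition of `m₀` and
`Σ_tot = C ⊗ U_N + Σ_obs ⊗ I_N` (`C` symmetric PSD, `Σ_obs` symmetric PD), for
observations `y = (y⁽¹⁾,…,y⁽ᴺ⁾)` with sample mean `ȳ`, the quadratic form decomposes as
`(y-m)ᵀ Σ_tot⁻¹ (y-m) = (ȳ-m₀)ᵀ (C + Σ_obs/N)⁻¹ (ȳ-m₀) + Σ_k (y⁽ᵏ⁾-ȳ)ᵀ Σ_obs⁻¹ (y⁽ᵏ⁾-ȳ)`. -/
theorem quadratic_form_decomposition {d N : ℕ} (hN : 0 < N)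
    (C S : Matrix (Fin d) (Fin d) ℝ) (hC : C.PosSemidef) (hS : S.PosDef)
    (m0 : Fin d → ℝ) (y : Fin N → Fin d → ℝ) :
    let Stot : Matrix (Fin d × Fin N) (Fin d × Fin N) ℝ :=
      C ⊗ₖ (Matrix.of fun _ _ => (1 : ℝ) : Matrix (Fin N) (Fin N) ℝ)
        + S ⊗ₖ (1 : Matrix (Fin N) (Fin N) ℝ)
    let v : Fin d × Fin N → ℝ := fun q => y q.2 q.1 - m0 q.1
    let ybar : Fin d → ℝ := fun i => (N : ℝ)⁻¹ * ∑ k, y k i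
    v ⬝ᵥ Stot⁻¹ *ᵥ v
      = (ybar - m0) ⬝ᵥ (C + (N : ℝ)⁻¹ • S)⁻¹ *ᵥ (ybar - m0)
        + ∑ k, (y k - ybar) ⬝ᵥ S⁻¹ *ᵥ (y k - ybar) := by
  intro Stot v ybar
  have hNne : (N : ℝ) ≠ 0 := Nat.cast_ne_zero.mpr hN.ne'
  set U : Matrix (Fin N) (Fin N) ℝ := Matrix.of fun _ _ => (1 : ℝ) with hU
  set P : Matrix (Fin N) (Fin N) ℝ := (N : ℝ)⁻¹ • U with hP
  set Q : Matrix (Fin N) (Fin N) ℝ := 1 - P with hQ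
  set A : Matrix (Fin d) (Fin d) ℝ := (N : ℝ) • C + S with hA
  -- A is positive definite
  have hCN : ((N : ℝ) • C).PosSemidef := by
    refine ⟨?_, fun x => ?_⟩
    · show ((N : ℝ) • C)ᴴ = (N : ℝ) • C
      rw [conjTranspose_smul, hC.1, star_trivial]
    · exact (hC.smul (Nat.cast_nonneg (α := ℝ) N)).2 x
  have hAposdef : A.PosDef := Matrix.PosDef.posSemidef_add hCN hS
  have hAdet : IsUnit A.det := isUnit_iff_ne_zero.mpr (ne_of_gt hAposdef.det_pos)
  have hSdet : IsUnit S.det := isUnit_iff_ne_zero.mpr (ne_of_gt hS.det_pos)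
  have hAinv : A * A⁻¹ = 1 := A.mul_nonsing_inv hAdet
  have hSinv : S * S⁻¹ = 1 := S.mul_nonsing_inv hSdet
  -- projection identities
  have hPP : P * P = P := by
    ext i j
    simp [hP, hU, Matrix.mul_apply, Finset.mul_sum, Matrix.smul_apply]
    field_simp
  have hPQ : P * Q = 0 := by rw [hQ, Matrix.mul_sub, hPP, Matrix.mul_one, sub_self]
  have hQP : Q * P = 0 := by rw [hQ, Matrix.sub_mul, hPP, Matrix.one_mul, sub_self]
  have hQQ : Q * Q = Q := by
    rw [hQ, Matrix.sub_mul, Matrix.one_mul, Matrix.mul_sub, Matrix.mul_one, hPP]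
    abel
  have hPQone : P + Q = 1 := by rw [hQ]; abel
  -- Stot rewritten
  have hStot : Stot = A ⊗ₖ P + S ⊗ₖ Q := by
    have h1 : C ⊗ₖ U = ((N : ℝ) • C) ⊗ₖ P := by
      rw [hP, Matrix.kronecker_smul, Matrix.smul_kronecker, smul_smul,
        inv_mul_cancel₀ hNne, one_smul]
    show C ⊗ₖ U + S ⊗ₖ (1 : Matrix (Fin N) (Fin N) ℝ) = _
    rw [h1, ← hPQone, Matrix.kronecker_add, hA, Matrix.add_kronecker]
    abel
  -- explicit inverse
  have hInv : Stot⁻¹ = A⁻¹ ⊗ₖ P + S⁻¹ ⊗ₖ Q := by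
    apply Matrix.inv_eq_right_inv
    rw [hStot, Matrix.add_mul, Matrix.mul_add, Matrix.mul_add,
      ← Matrix.mul_kronecker_mul, ← Matrix.mul_kronecker_mul, ← Matrix.mul_kronecker_mul,
      ← Matrix.mul_kronecker_mul, hAinv, hSinv, hPP, hPQ, hQP, hQQ,
      Matrix.kronecker_zero, Matrix.kronecker_zero]
    have h4 : (1 : Matrix (Fin d) (Fin d) ℝ) ⊗ₖ P + 0 + (0 + 1 ⊗ₖ Q)
        = (1 : Matrix (Fin d) (Fin d) ℝ) ⊗ₖ (P + Q) := by
      rw [Matrix.kronecker_add]; abel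
    rw [h4, hPQone, Matrix.one_kronecker_one]
  -- effective covariance inverse
  have hCeff : (C + (N : ℝ)⁻¹ • S)⁻¹ = (N : ℝ) • A⁻¹ := by
    apply Matrix.inv_eq_right_inv
    have h3 : C + (N : ℝ)⁻¹ • S = (N : ℝ)⁻¹ • A := by
      rw [hA, smul_add, smul_smul, inv_mul_cancel₀ hNne, one_smul]
    rw [h3, Matrix.smul_mul, Matrix.mul_smul, hAinv, smul_smul,
      inv_mul_cancel₀ hNne, one_smul]
  set w : Fin d → ℝ := ybar - m0 with hw
  -- sum facts
  have hsumv : ∀ j, (∑ l, v (j, l)) = (N : ℝ) * w j := by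
    intro j
    simp only [v, hw, Pi.sub_apply, ybar]
    rw [Finset.sum_sub_distrib, Finset.sum_const, Finset.card_univ, Fintype.card_fin,
      mul_sub, ← mul_assoc, mul_inv_cancel₀ hNne, one_mul, nsmul_eq_mul]
  have hzero : ∀ j, (∑ k, (y k j - ybar j)) = 0 := by
    intro j
    rw [Finset.sum_sub_distrib, Finset.sum_const, Finset.card_univ, Fintype.card_fin,
      nsmul_eq_mul]
    simp only [ybar]
    rw [← mul_assoc, mul_inv_cancel₀ hNne, one_mul, sub_self]
  rw [hInv, Matrix.add_mulVec, dotProduct_add]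
  -- first term
  have hT1 : v ⬝ᵥ (A⁻¹ ⊗ₖ P) *ᵥ v = (ybar - m0) ⬝ᵥ (C + (N : ℝ)⁻¹ • S)⁻¹ *ᵥ (ybar - m0) := by
    rw [hCeff]
    have hmv : ∀ q : Fin d × Fin N, ((A⁻¹ ⊗ₖ P) *ᵥ v) q = (A⁻¹ *ᵥ w) q.1 := by
      rintro ⟨i, k⟩
      show (∑ q : Fin d × Fin N, (A⁻¹ ⊗ₖ P) (i, k) q * v q) = ∑ j, A⁻¹ i j * w j
      rw [Fintype.sum_prod_type]
      refine Finset.sum_congr rfl fun j _ => ?_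
      have step : ∀ l : Fin N, (A⁻¹ ⊗ₖ P) (i, k) (j, l) * v (j, l)
          = A⁻¹ i j * (N : ℝ)⁻¹ * v (j, l) := by
        intro l
        simp [kroneckerMap_apply, hP, hU, Matrix.smul_apply]
      simp only [step]
      rw [← Finset.mul_sum, hsumv j, mul_assoc, ← mul_assoc (N : ℝ)⁻¹,
        inv_mul_cancel₀ hNne, one_mul]
    show (∑ q : Fin d × Fin N, v q * ((A⁻¹ ⊗ₖ P) *ᵥ v) q)
        = ∑ i, w i * (((N : ℝ) • A⁻¹) *ᵥ w) i
    simp only [hmv]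
    rw [Fintype.sum_prod_type]
    refine Finset.sum_congr rfl fun i _ => ?_
    calc (∑ k : Fin N, v (i, k) * (A⁻¹ *ᵥ w) (i, k).1)
        = (∑ k : Fin N, v (i, k)) * (A⁻¹ *ᵥ w) i := by rw [Finset.sum_mul]
      _ = w i * (((N : ℝ) • A⁻¹) *ᵥ w) i := by
          rw [hsumv i]
          simp only [Matrix.smul_mulVec, Pi.smul_apply, smul_eq_mul]
          ring
  -- second term
  have hT2 : v ⬝ᵥ (S⁻¹ ⊗ₖ Q) *ᵥ v = ∑ k, (y k - ybar) ⬝ᵥ S⁻¹ *ᵥ (y k - ybar) := by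
    have hmv : ∀ q : Fin d × Fin N, ((S⁻¹ ⊗ₖ Q) *ᵥ v) q
        = (S⁻¹ *ᵥ (y q.2 - ybar)) q.1 := by
      rintro ⟨i, k⟩
      show (∑ q : Fin d × Fin N, (S⁻¹ ⊗ₖ Q) (i, k) q * v q)
          = ∑ j, S⁻¹ i j * (y k j - ybar j)
      rw [Fintype.sum_prod_type]
      refine Finset.sum_congr rfl fun j _ => ?_
      have step : ∀ l : Fin N, (S⁻¹ ⊗ₖ Q) (i, k) (j, l) * v (j, l)
          = (if k = l then S⁻¹ i j * v (j, l) else 0) - S⁻¹ i j * (N : ℝ)⁻¹ * v (j, l) := by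
        intro l
        simp only [kroneckerMap_apply, hQ, hP, hU, Matrix.sub_apply, Matrix.one_apply,
          Matrix.smul_apply, Matrix.of_apply, smul_eq_mul, mul_one]
        by_cases h : k = l <;> simp [h] <;> ring
      simp only [step]
      rw [Finset.sum_sub_distrib, Finset.sum_ite_eq, if_pos (Finset.mem_univ k),
        ← Finset.mul_sum, hsumv j]
      have hkey : S⁻¹ i j * (N : ℝ)⁻¹ * ((N : ℝ) * w j) = S⁻¹ i j * w j := by
        rw [mul_assoc, ← mul_assoc (N : ℝ)⁻¹, inv_mul_cancel₀ hNne, one_mul]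
      rw [hkey, ← mul_sub]
      congr 1
      show y k j - m0 j - (ybar j - m0 j) = y k j - ybar j
      ring
    show (∑ q : Fin d × Fin N, v q * ((S⁻¹ ⊗ₖ Q) *ᵥ v) q) = _
    simp only [hmv]
    rw [Fintype.sum_prod_type, Finset.sum_comm]
    have expand : ∀ k : Fin N, (∑ i, v (i, k) * (S⁻¹ *ᵥ (y k - ybar)) (i, k).1)
        = (y k - ybar) ⬝ᵥ S⁻¹ *ᵥ (y k - ybar)
          + ∑ i, w i * (S⁻¹ *ᵥ (y k - ybar)) i := by
      intro k
      show (∑ i, v (i, k) * (S⁻¹ *ᵥ (y k - ybar)) i)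
          = (∑ i, (y k i - ybar i) * (S⁻¹ *ᵥ (y k - ybar)) i)
            + ∑ i, w i * (S⁻¹ *ᵥ (y k - ybar)) i
      rw [← Finset.sum_add_distrib]
      refine Finset.sum_congr rfl fun i _ => ?_
      have hv : v (i, k) = (y k i - ybar i) + w i := by
        show y k i - m0 i = (y k i - ybar i) + (ybar i - m0 i); ring
      rw [hv]; ring
    simp only [expand]
    rw [Finset.sum_add_distrib]
    have hz : (∑ k, ∑ i, w i * (S⁻¹ *ᵥ (y k - ybar)) i) = 0 := by
      rw [Finset.sum_comm]
      refine Finset.sum_eq_zero fun i _ => ?_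
      rw [← Finset.mul_sum]
      have hzz : (∑ k, (S⁻¹ *ᵥ (y k - ybar)) i) = 0 := by
        show (∑ k, ∑ j, S⁻¹ i j * (y k j - ybar j)) = 0
        rw [Finset.sum_comm]
        refine Finset.sum_eq_zero fun j _ => ?_
        rw [← Finset.mul_sum, hzero j, mul_zero]
      rw [hzz, mul_zero]
    rw [hz, add_zero]
  rw [hT1, hT2]
end

section
/- The functional D(ν) = ∫_X det(C_ν(x*)) L_ν(y|x*) p(x*) dx* has the supermartingale property: for any sequential design (x_n), any n, and any x ∈ X, E_{n,x}[D(ν_{n+1})] ≤ D(ν_n), where E_{n,x} is the conditional expectation given the first n data points and x_{n+1} = x. -/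
open Matrix Kronecker MeasureTheory

/-- The Gaussian density with mean `m` and covariance `S`, evaluated at `z`. -/
noncomputable def gaussPdf {ι : Type*} [Fintype ι] [DecidableEq ι]
    (m : ι → ℝ) (S : Matrix ι ι ℝ) (z : ι → ℝ) : ℝ :=
  (2 * Real.pi) ^ (-(Fintype.card ι : ℝ) / 2) * S.det ^ (-(1 : ℝ) / 2) *
    Real.exp (-(1 / 2) * ((z - m) ⬝ᵥ S⁻¹ *ᵥ (z - m)))

/-- Total covariance `Cm ⊗ U_N + Sobs ⊗ I_N` of the `N` flattened observations. -/
noncomputable def totCov {d : ℕ} (N : ℕ) (Sobs Cm : Matrix (Fin d) (Fin d) ℝ) :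
    Matrix (Fin d × Fin N) (Fin d × Fin N) ℝ :=
  Cm ⊗ₖ (Matrix.of fun _ _ => (1 : ℝ) : Matrix (Fin N) (Fin N) ℝ)
    + Sobs ⊗ₖ (1 : Matrix (Fin N) (Fin N) ℝ)

/-- The `N`-fold repetition `(m, …, m) ∈ ℝ^{Nd}` of `m ∈ ℝ^d`. -/
def repVec {d : ℕ} (N : ℕ) (m : Fin d → ℝ) : Fin d × Fin N → ℝ := fun q => m q.1

/-- Updated predictive covariance `C_{n+1}(x*|x) = C_n(x*) - C_n(x*,x) C_n(x)⁻¹ C_n(x*,x)ᵀ`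
after conditioning on a new design point `x` (independent of the new output). -/
noncomputable def covUpd {p d : ℕ}
    (k : (Fin p → ℝ) → (Fin p → ℝ) → Matrix (Fin d) (Fin d) ℝ)
    (xs x : Fin p → ℝ) : Matrix (Fin d) (Fin d) ℝ :=
  k xs xs - k xs x * (k x x)⁻¹ * (k xs x)ᵀ

/-- Updated predictive mean `m_{n+1}(x*|x,z) = m_n(x*) + C_n(x*,x) C_n(x)⁻¹ (z - m_n(x))`. -/
noncomputable def meanUpd {p d : ℕ}
    (mn : (Fin p → ℝ) → (Fin d → ℝ))
    (k : (Fin p → ℝ) → (Fin p → ℝ) → Matrix (Fin d) (Fin d) ℝ)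
    (xs x : Fin p → ℝ) (z : Fin d → ℝ) : Fin d → ℝ :=
  mn xs + (k xs x * (k x x)⁻¹) *ᵥ (z - mn x)

set_option linter.unusedSectionVars false
set_option linter.unusedTactic false
set_option maxHeartbeats 1000000

section Aux
open scoped MatrixOrder
variable {ι : Type*} [Fintype ι] [DecidableEq ι]








lemma dot_adjoint' {κ : Type*} [Fintype κ] (A : Matrix ι κ ℝ) (v : κ → ℝ) (w : ι → ℝ) :
    v ⬝ᵥ Aᵀ *ᵥ w = (A *ᵥ v) ⬝ᵥ w := by
  rw [dotProduct_comm (A *ᵥ v) w, dotProduct_mulVec w A v, dotProduct_comm v,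
    Matrix.mulVec_transpose]

lemma psd_det_nonneg' {A : Matrix ι ι ℝ} (hA : A.PosSemidef) : 0 ≤ A.det := by
  rw [hA.isHermitian.det_eq_prod_eigenvalues]
  exact Finset.prod_nonneg fun i _ => hA.eigenvalues_nonneg i

/-- The measurable equivalence of `ι → ℝ` given by multiplication by an invertible matrix. -/
noncomputable def mulVecEquiv (T : Matrix ι ι ℝ) (hT : Invertible T) : (ι → ℝ) ≃ᵐ (ι → ℝ) :=
  (Matrix.toLinearEquiv' T hT).toContinuousLinearEquiv.toHomeomorph.toMeasurableEquiv

lemma mulVecEquiv_map (T : Matrix ι ι ℝ) (hT : Invertible T) :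
    Measure.map (mulVecEquiv T hT) volume
      = ENNReal.ofReal |T.det|⁻¹ • (volume : Measure (ι → ℝ)) := by
  have h1 : ⇑(mulVecEquiv T hT) = ⇑(Matrix.toLin' T) := rfl
  have hdet : T.det ≠ 0 :=
    ((Matrix.isUnit_iff_isUnit_det T).1 (isUnit_of_invertible T)).ne_zero
  rw [h1, Real.map_matrix_volume_pi_eq_smul_volume_pi hdet, abs_inv]

lemma integral_mulVec_comp (T : Matrix ι ι ℝ) (hT : Invertible T) (f : (ι → ℝ) → ℝ) :
    ∫ w : ι → ℝ, f (T *ᵥ w) = |T.det|⁻¹ * ∫ z : ι → ℝ, f z := by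
  have h := MeasureTheory.integral_map_equiv (μ := volume) (mulVecEquiv T hT) f
  have h2 : ∀ w, f (mulVecEquiv T hT w) = f (T *ᵥ w) := fun w => rfl
  simp only [h2] at h
  rw [← h, mulVecEquiv_map, integral_smul_measure, ENNReal.toReal_ofReal (by positivity),
    smul_eq_mul]

lemma integrable_mulVec_comp (T : Matrix ι ι ℝ) (hT : Invertible T) (f : (ι → ℝ) → ℝ)
    (hf : Integrable fun w : ι → ℝ => f (T *ᵥ w)) : Integrable f := by
  have hdet : T.det ≠ 0 :=
    ((Matrix.isUnit_iff_isUnit_det T).1 (isUnit_of_invertible T)).ne_zero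
  have h := (mulVecEquiv T hT).measurableEmbedding.integrable_map_iff (g := f)
    (μ := (volume : Measure (ι → ℝ)))
  rw [mulVecEquiv_map] at h
  have h2 : Integrable f (ENNReal.ofReal |T.det|⁻¹ • (volume : Measure (ι → ℝ))) := by
    rw [h]; exact hf
  rwa [integrable_smul_measure (by simp [hdet]) (by simp)] at h2

/-- Gaussian integral for a positive definite quadratic form. -/
lemma integral_exp_quad {M : Matrix ι ι ℝ} (hM : M.PosDef) :
    (∫ u : ι → ℝ, Real.exp (-(1/2) * (u ⬝ᵥ M *ᵥ u)))
      = (2 * Real.pi) ^ ((Fintype.card ι : ℝ) / 2) * M.det ^ (-(1:ℝ) / 2) ∧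
    Integrable (fun u : ι → ℝ => Real.exp (-(1/2) * (u ⬝ᵥ M *ᵥ u))) := by
  classical
  have hMdet : (0:ℝ) < M.det := hM.det_pos
  set S := CFC.sqrt M with hSdef
  have hSps : S.PosSemidef := (CFC.sqrt_nonneg M).posSemidef
  have hSS : S * S = M := CFC.sqrt_mul_sqrt_self M hM.posSemidef.nonneg
  have hdetS : 0 < S.det := by
    have h1 : S.det * S.det = M.det := by rw [← Matrix.det_mul, hSS]
    nlinarith [psd_det_nonneg' hSps]
  have hSu : IsUnit S.det := hdetS.ne'.isUnit
  have hST : Sᵀ = S := by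
    rw [← Matrix.conjTranspose_eq_transpose_of_trivial]; exact hSps.isHermitian
  haveI hSinv : Invertible S := S.invertibleOfIsUnitDet hSu
  set T := S⁻¹ with hTdef
  have hdetT : T.det = S.det⁻¹ := by
    rw [hTdef, Matrix.det_nonsing_inv, Ring.inverse_eq_inv']
  haveI hTinv : Invertible T := T.invertibleOfIsUnitDet (by rw [hdetT]; exact hdetS.ne'.isUnit.inv)
  have hTT : Tᵀ = T := by rw [hTdef, Matrix.transpose_nonsing_inv, hST]
  -- quadratic form becomes the standard one
  have hTMT : T * M * T = 1 := by
    calc T * M * T = (S⁻¹ * S) * (S * S⁻¹) := by rw [← hSS, hTdef]; noncomm_ring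
      _ = 1 := by rw [Matrix.nonsing_inv_mul S hSu, Matrix.mul_nonsing_inv S hSu, one_mul]
  have hquad : ∀ w : ι → ℝ, (T *ᵥ w) ⬝ᵥ M *ᵥ (T *ᵥ w) = w ⬝ᵥ w := by
    intro w
    rw [← dot_adjoint' T w, hTT, Matrix.mulVec_mulVec, Matrix.mulVec_mulVec,
      hTMT, Matrix.one_mulVec]
  -- the composed integrand is a product of 1-D Gaussians
  have hprod : ∀ w : ι → ℝ, Real.exp (-(1/2) * ((T *ᵥ w) ⬝ᵥ M *ᵥ (T *ᵥ w)))
      = ∏ i, Real.exp (-(1/2) * (w i ^ 2)) := by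
    intro w
    rw [hquad w, ← Real.exp_sum]
    congr 1
    rw [dotProduct, Finset.mul_sum]
    exact Finset.sum_congr rfl fun i _ => by ring
  have h1d : Integrable (fun x : ℝ => Real.exp (-(1/2) * x ^ 2)) := by
    have := integrable_exp_neg_mul_sq (b := (1/2 : ℝ)) (by norm_num)
    simpa using this
  have h1dval : (∫ x : ℝ, Real.exp (-(1/2) * x ^ 2)) = Real.sqrt (2 * Real.pi) := by
    have := integral_gaussian (1/2 : ℝ)
    simp only [neg_mul] at this ⊢
    rw [this]
    rw [show Real.pi / (1/2) = 2 * Real.pi by ring]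
  have hintc : Integrable (fun w : ι → ℝ =>
      Real.exp (-(1/2) * ((T *ᵥ w) ⬝ᵥ M *ᵥ (T *ᵥ w)))) := by
    simp only [hprod]
    exact Integrable.fintype_prod (f := fun _ : ι => fun x : ℝ => Real.exp (-(1/2) * x ^ 2))
      fun i => h1d
  have hint : Integrable (fun u : ι → ℝ => Real.exp (-(1/2) * (u ⬝ᵥ M *ᵥ u))) :=
    integrable_mulVec_comp T hTinv _ hintc
  refine ⟨?_, hint⟩
  have hchg := integral_mulVec_comp T hTinv
    (fun u : ι → ℝ => Real.exp (-(1/2) * (u ⬝ᵥ M *ᵥ u)))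
  have hval : (∫ w : ι → ℝ, Real.exp (-(1/2) * ((T *ᵥ w) ⬝ᵥ M *ᵥ (T *ᵥ w))))
      = (2 * Real.pi) ^ ((Fintype.card ι : ℝ) / 2) := by
    calc (∫ w : ι → ℝ, Real.exp (-(1/2) * ((T *ᵥ w) ⬝ᵥ M *ᵥ (T *ᵥ w))))
        = ∫ w : ι → ℝ, ∏ i, Real.exp (-(1/2) * (w i ^ 2)) := by simp only [hprod]
      _ = (∫ x : ℝ, Real.exp (-(1/2) * x ^ 2)) ^ (Fintype.card ι) := by
          exact MeasureTheory.integral_fintype_prod_eq_pow (ι := ι)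
            (fun x : ℝ => Real.exp (-(1/2) * x ^ 2))
      _ = Real.sqrt (2 * Real.pi) ^ (Fintype.card ι) := by rw [h1dval]
      _ = (2 * Real.pi) ^ ((Fintype.card ι : ℝ) / 2) := by
          rw [Real.sqrt_eq_rpow, ← Real.rpow_natCast ((2*Real.pi) ^ ((1:ℝ)/2)) _,
            ← Real.rpow_mul (by positivity)]
          rw [show (1:ℝ)/2 * (Fintype.card ι : ℕ) = (Fintype.card ι : ℝ)/2 by push_cast; ring]
  rw [hchg] at hval
  have hTdetabs : |T.det|⁻¹ = S.det := by
    rw [hdetT, abs_inv, abs_of_pos hdetS, inv_inv]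
  rw [hTdetabs] at hval
  have hdetM : M.det ^ (-(1:ℝ)/2) = S.det⁻¹ := by
    have h1 : M.det = S.det ^ (2:ℕ) := by rw [← hSS, Matrix.det_mul]; ring
    rw [h1, ← Real.rpow_natCast S.det 2, ← Real.rpow_mul hdetS.le,
      show (2:ℕ) * (-(1:ℝ)/2) = -1 by norm_num, Real.rpow_neg_one]
  rw [hdetM]
  have hS0 : S.det ≠ 0 := hdetS.ne'
  field_simp at hval ⊢
  linarith [hval]







lemma herm_transpose0 {A : Matrix ι ι ℝ} (h : A.IsHermitian) : Aᵀ = A := by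
  rw [← Matrix.conjTranspose_eq_transpose_of_trivial]; exact h


lemma psd_quad_nonneg {A : Matrix ι ι ℝ} (hA : A.PosSemidef) (v : ι → ℝ) :
    0 ≤ v ⬝ᵥ A *ᵥ v := by
  simpa using hA.dotProduct_mulVec_nonneg v

lemma det_le_det_of_loewner {A B : Matrix ι ι ℝ} (hA : A.PosSemidef) (hB : B.PosDef)
    (hBA : (B - A).PosSemidef) : A.det ≤ B.det := by
  have hBdet : (0:ℝ) < B.det := hB.det_pos
  have hBu : IsUnit B.det := hBdet.ne'.isUnit
  have hBi : (B⁻¹).PosSemidef := hB.inv.posSemidef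
  set S := CFC.sqrt B⁻¹ with hSdef
  have hSps : S.PosSemidef := (CFC.sqrt_nonneg B⁻¹).posSemidef
  have hSS : S * S = B⁻¹ := CFC.sqrt_mul_sqrt_self B⁻¹ hBi.nonneg
  have hdetS : 0 < S.det := by
    have h1 : S.det * S.det = (B⁻¹).det := by rw [← Matrix.det_mul, hSS]
    have h2 : (0:ℝ) < (B⁻¹).det := hB.inv.det_pos
    nlinarith [psd_det_nonneg' hSps]
  have hSu : IsUnit S.det := hdetS.ne'.isUnit
  have hST : Sᴴ = S := hSps.isHermitian
  have hBSS : B = S⁻¹ * S⁻¹ := by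
    have h := congrArg Inv.inv hSS
    rw [Matrix.mul_inv_rev, Matrix.nonsing_inv_nonsing_inv B hBu] at h
    exact h.symm
  have hSBS : S * B * S = 1 := by
    have h : S * (S⁻¹ * S⁻¹) * S = (S * S⁻¹) * (S⁻¹ * S) := by noncomm_ring
    rw [hBSS, h, Matrix.mul_nonsing_inv S hSu, Matrix.nonsing_inv_mul S hSu, one_mul]
  set C := S * A * S with hCdef
  have hC : C.PosSemidef := by
    have := hA.mul_mul_conjTranspose_same S
    rwa [hST] at this
  have h1C : (1 - C).PosSemidef := by
    have := hBA.mul_mul_conjTranspose_same S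
    rw [hST] at this
    have he : S * (B - A) * S = 1 - C := by rw [Matrix.mul_sub, Matrix.sub_mul, hSBS]
    rwa [he] at this
  -- eigenvalues of C are in [0,1]
  have heig : ∀ i, hC.1.eigenvalues i ≤ 1 := by
    intro i
    set v : ι → ℝ := ⇑(hC.1.eigenvectorBasis i) with hv
    have hnorm : v ⬝ᵥ v = 1 := by
      have h1 : ‖hC.1.eigenvectorBasis i‖ = 1 := hC.1.eigenvectorBasis.orthonormal.1 i
      have h2 : ‖hC.1.eigenvectorBasis i‖ ^ 2 = ∑ j, v j ^ 2 := by
        rw [EuclideanSpace.norm_eq]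
        rw [Real.sq_sqrt (by positivity)]
        simp [hv, sq_abs]
      have : v ⬝ᵥ v = ∑ j, v j ^ 2 := by simp [dotProduct, sq]
      rw [this, ← h2, h1]; norm_num
    have hmv : C *ᵥ v = hC.1.eigenvalues i • v := hC.1.mulVec_eigenvectorBasis i
    have hq := psd_quad_nonneg h1C v
    rw [Matrix.sub_mulVec, Matrix.one_mulVec, dotProduct_sub, hmv, dotProduct_smul,
      hnorm] at hq
    simpa using hq
  have hdetC : C.det ≤ 1 := by
    have h := hC.1.det_eq_prod_eigenvalues
    push_cast at h
    rw [h]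
    exact Finset.prod_le_one (fun i _ => hC.eigenvalues_nonneg i) (fun i _ => heig i)
  have hdetCA : C.det = S.det * A.det * S.det := by
    rw [hCdef, Matrix.det_mul, Matrix.det_mul]
  have hdetSB : S.det * S.det * B.det = 1 := by
    have h1 : S.det * S.det = (B⁻¹).det := by rw [← Matrix.det_mul, hSS]
    rw [h1, Matrix.det_nonsing_inv, Ring.inverse_eq_inv', inv_mul_cancel₀ hBdet.ne']
  nlinarith [hdetC, hdetCA, hdetSB, psd_det_nonneg' hA]




variable {κ : Type*} [Fintype κ] [DecidableEq κ]

lemma herm_transpose' {A : Matrix ι ι ℝ} (h : A.IsHermitian) : Aᵀ = A := by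
  rw [← Matrix.conjTranspose_eq_transpose_of_trivial]; exact h

lemma dot_adjoint2 {A : Matrix ι κ ℝ} (w : ι → ℝ) (v : κ → ℝ) :
    (Aᵀ *ᵥ w) ⬝ᵥ v = w ⬝ᵥ A *ᵥ v := by
  rw [dotProduct_comm, dot_adjoint', dotProduct_comm]

lemma dot_symm' {S : Matrix ι ι ℝ} (hS : Sᵀ = S) (v w : ι → ℝ) :
    v ⬝ᵥ S *ᵥ w = w ⬝ᵥ S *ᵥ v := by
  conv_lhs => rw [← hS, dot_adjoint', dotProduct_comm]

/-- Gaussian convolution / marginalization identity. -/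
lemma gauss_conv {K : Matrix κ κ ℝ} (hK : K.PosDef) {Sg : Matrix ι ι ℝ} (hSg : Sg.PosDef)
    (A : Matrix ι κ ℝ) (m : κ → ℝ) (b y : ι → ℝ) :
    (∫ z : κ → ℝ, gaussPdf m K z * gaussPdf (A *ᵥ z + b) Sg y)
      = gaussPdf (A *ᵥ m + b) (Sg + A * K * Aᵀ) y := by
  classical
  have hKi : (K⁻¹).PosDef := hK.inv
  have hSi : (Sg⁻¹).PosDef := hSg.inv
  have hKu : IsUnit K.det := hK.det_pos.ne'.isUnit
  have hSu : IsUnit Sg.det := hSg.det_pos.ne'.isUnit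
  have hAtSA : (Aᵀ * Sg⁻¹ * A).PosSemidef := by
    have := hSi.posSemidef.mul_mul_conjTranspose_same Aᵀ
    rwa [Matrix.conjTranspose_eq_transpose_of_trivial, Matrix.transpose_transpose] at this
  obtain ⟨M, hMdef⟩ : ∃ M : Matrix κ κ ℝ, M = K⁻¹ + Aᵀ * Sg⁻¹ * A := ⟨_, rfl⟩
  have hM : M.PosDef := hMdef ▸ hKi.add_posSemidef hAtSA
  have hMu : IsUnit M.det := hM.det_pos.ne'.isUnit
  have hAKA : (A * K * Aᵀ).PosSemidef := by
    have := hK.posSemidef.mul_mul_conjTranspose_same A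
    rwa [Matrix.conjTranspose_eq_transpose_of_trivial] at this
  have hT : (Sg + A * K * Aᵀ).PosDef := hSg.add_posSemidef hAKA
  have hKK : K * K⁻¹ = 1 := Matrix.mul_nonsing_inv K hKu
  have hKiK : K⁻¹ * K = 1 := Matrix.nonsing_inv_mul K hKu
  have hSS1 : Sg * Sg⁻¹ = 1 := Matrix.mul_nonsing_inv Sg hSu
  have hMMi : M * M⁻¹ = 1 := Matrix.mul_nonsing_inv M hMu
  have hSisym : (Sg⁻¹)ᵀ = Sg⁻¹ := herm_transpose' hSi.isHermitian
  have hMsym : Mᵀ = M := herm_transpose' hM.isHermitian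
  -- Woodbury identity
  have hKM : K * M = 1 + K * (Aᵀ * Sg⁻¹ * A) := by
    rw [hMdef, Matrix.mul_add, hKK]
  have h2' : K * (Aᵀ * Sg⁻¹ * A) * (M⁻¹ * (Aᵀ * Sg⁻¹))
      = K * (Aᵀ * Sg⁻¹) - M⁻¹ * (Aᵀ * Sg⁻¹) := by
    have e1 : K * (Aᵀ * Sg⁻¹ * A) = K * M - 1 := by rw [hKM]; abel
    have e2 : (K * M - 1) * (M⁻¹ * (Aᵀ * Sg⁻¹))
        = K * (M * M⁻¹) * (Aᵀ * Sg⁻¹) - M⁻¹ * (Aᵀ * Sg⁻¹) := by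
      simp only [Matrix.sub_mul, Matrix.mul_sub, Matrix.add_mul, Matrix.mul_add,
        Matrix.mul_assoc, Matrix.one_mul, Matrix.mul_one]
    rw [e1, e2, hMMi, Matrix.mul_one]
  have hWood : (Sg + A * K * Aᵀ)⁻¹ = Sg⁻¹ - Sg⁻¹ * A * M⁻¹ * Aᵀ * Sg⁻¹ := by
    apply Matrix.inv_eq_right_inv
    calc (Sg + A * K * Aᵀ) * (Sg⁻¹ - Sg⁻¹ * A * M⁻¹ * Aᵀ * Sg⁻¹)
        = Sg * Sg⁻¹ + A * (K * (Aᵀ * Sg⁻¹)) - (Sg * Sg⁻¹) * (A * (M⁻¹ * (Aᵀ * Sg⁻¹)))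
            - A * (K * (Aᵀ * Sg⁻¹ * A) * (M⁻¹ * (Aᵀ * Sg⁻¹))) := by
          simp only [Matrix.sub_mul, Matrix.mul_sub, Matrix.add_mul, Matrix.mul_add,
        Matrix.mul_assoc, Matrix.one_mul, Matrix.mul_one]
          abel
      _ = 1 + A * (K * (Aᵀ * Sg⁻¹)) - 1 * (A * (M⁻¹ * (Aᵀ * Sg⁻¹)))
            - A * (K * (Aᵀ * Sg⁻¹) - M⁻¹ * (Aᵀ * Sg⁻¹)) := by rw [hSS1, h2']
      _ = 1 := by
          simp only [Matrix.sub_mul, Matrix.mul_sub, Matrix.add_mul, Matrix.mul_add,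
        Matrix.mul_assoc, Matrix.one_mul, Matrix.mul_one]
          abel
  -- determinant identity
  have hdet : (Sg + A * K * Aᵀ).det = Sg.det * (M.det * K.det) := by
    have f1 : Sg + A * K * Aᵀ = Sg * (1 + Sg⁻¹ * (A * K) * Aᵀ) := by
      have : Sg * (1 + Sg⁻¹ * (A * K) * Aᵀ) = Sg + (Sg * Sg⁻¹) * (A * K * Aᵀ) := by
        simp only [Matrix.sub_mul, Matrix.mul_sub, Matrix.add_mul, Matrix.mul_add,
        Matrix.mul_assoc, Matrix.one_mul, Matrix.mul_one]
      rw [this, hSS1, Matrix.one_mul]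
    have f2 : (1 : Matrix κ κ ℝ) + Aᵀ * (Sg⁻¹ * (A * K)) = M * K := by
      have e : M * K = K⁻¹ * K + Aᵀ * (Sg⁻¹ * (A * K)) := by
        rw [hMdef]
        simp only [Matrix.sub_mul, Matrix.mul_sub, Matrix.add_mul, Matrix.mul_add,
        Matrix.mul_assoc, Matrix.one_mul, Matrix.mul_one]
      rw [e, hKiK]
    rw [f1, Matrix.det_mul, Matrix.det_one_add_mul_comm (Sg⁻¹ * (A * K)) Aᵀ, f2,
      Matrix.det_mul]
  -- complete the square
  obtain ⟨r, hrdef⟩ : ∃ r : ι → ℝ, r = y - (A *ᵥ m + b) := ⟨_, rfl⟩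
  obtain ⟨w0, hw0def⟩ : ∃ w0 : κ → ℝ, w0 = Aᵀ *ᵥ (Sg⁻¹ *ᵥ r) := ⟨_, rfl⟩
  obtain ⟨u0, hu0def⟩ : ∃ u0 : κ → ℝ, u0 = M⁻¹ *ᵥ w0 := ⟨_, rfl⟩
  obtain ⟨c, hcdef⟩ : ∃ c : ℝ, c = r ⬝ᵥ (Sg + A * K * Aᵀ)⁻¹ *ᵥ r := ⟨_, rfl⟩
  have hMu0 : M *ᵥ u0 = w0 := by
    rw [hu0def, Matrix.mulVec_mulVec, hMMi, Matrix.one_mulVec]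
  have hsq : ∀ z : κ → ℝ,
      ((z - m) ⬝ᵥ K⁻¹ *ᵥ (z - m)) + ((y - (A *ᵥ z + b)) ⬝ᵥ Sg⁻¹ *ᵥ (y - (A *ᵥ z + b)))
        = (z - (m + u0)) ⬝ᵥ M *ᵥ (z - (m + u0)) + c := by
    intro z
    obtain ⟨u, hudef⟩ : ∃ u : κ → ℝ, u = z - m := ⟨_, rfl⟩
    have hyz : y - (A *ᵥ z + b) = r - A *ᵥ u := by
      rw [hrdef, hudef, Matrix.mulVec_sub]; abel
    have ha : (A *ᵥ u) ⬝ᵥ Sg⁻¹ *ᵥ r = u ⬝ᵥ w0 := by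
      rw [hw0def, dot_adjoint']
    have hb : r ⬝ᵥ Sg⁻¹ *ᵥ (A *ᵥ u) = u ⬝ᵥ w0 := by
      rw [dot_symm' hSisym, ha]
    have hc2 : (A *ᵥ u) ⬝ᵥ Sg⁻¹ *ᵥ (A *ᵥ u) = u ⬝ᵥ (Aᵀ * Sg⁻¹ * A) *ᵥ u := by
      rw [← dot_adjoint' A u, Matrix.mulVec_mulVec, Matrix.mulVec_mulVec]
    have hLHS : (r - A *ᵥ u) ⬝ᵥ Sg⁻¹ *ᵥ (r - A *ᵥ u)
        = r ⬝ᵥ Sg⁻¹ *ᵥ r - 2 * (u ⬝ᵥ w0) + u ⬝ᵥ (Aᵀ * Sg⁻¹ * A) *ᵥ u := by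
      rw [Matrix.mulVec_sub, dotProduct_sub, sub_dotProduct, sub_dotProduct, ha, hb, hc2]
      ring
    have hMu' : ∀ v : κ → ℝ, v ⬝ᵥ M *ᵥ v = v ⬝ᵥ K⁻¹ *ᵥ v + v ⬝ᵥ (Aᵀ * Sg⁻¹ * A) *ᵥ v := by
      intro v
      rw [hMdef, Matrix.add_mulVec, dotProduct_add]
    have hzu : z - (m + u0) = u - u0 := by rw [hudef]; abel
    have hRHS : (u - u0) ⬝ᵥ M *ᵥ (u - u0)
        = u ⬝ᵥ M *ᵥ u - 2 * (u ⬝ᵥ w0) + u0 ⬝ᵥ w0 := by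
      rw [Matrix.mulVec_sub, dotProduct_sub, sub_dotProduct, sub_dotProduct, hMu0,
        dot_symm' hMsym u0 u, hMu0]
      ring
    have hSmove : ∀ v : ι → ℝ, (Sg⁻¹ *ᵥ r) ⬝ᵥ v = r ⬝ᵥ Sg⁻¹ *ᵥ v := by
      intro v
      conv_lhs => rw [show Sg⁻¹ = (Sg⁻¹)ᵀ from hSisym.symm]
      exact dot_adjoint2 r v
    have hu0w0 : u0 ⬝ᵥ w0 = r ⬝ᵥ (Sg⁻¹ * A * M⁻¹ * Aᵀ * Sg⁻¹) *ᵥ r := by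
      rw [hu0def, hw0def]
      rw [dotProduct_comm, dot_adjoint2, hSmove,
        Matrix.mulVec_mulVec, Matrix.mulVec_mulVec, Matrix.mulVec_mulVec,
        Matrix.mulVec_mulVec]
    have hcval : c = r ⬝ᵥ Sg⁻¹ *ᵥ r - r ⬝ᵥ (Sg⁻¹ * A * M⁻¹ * Aᵀ * Sg⁻¹) *ᵥ r := by
      rw [hcdef, hWood, Matrix.sub_mulVec, dotProduct_sub]
    rw [hyz, hLHS, hzu, hRHS, hMu' u, hu0w0, hcval, hudef.symm]
    ring
  -- now compute the integral
  have hiq := integral_exp_quad hM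
  calc (∫ z : κ → ℝ, gaussPdf m K z * gaussPdf (A *ᵥ z + b) Sg y)
      = ∫ z : κ → ℝ,
          ((2 * Real.pi) ^ (-(Fintype.card κ : ℝ) / 2) * K.det ^ (-(1:ℝ) / 2)
            * ((2 * Real.pi) ^ (-(Fintype.card ι : ℝ) / 2) * Sg.det ^ (-(1:ℝ) / 2))
            * Real.exp (-(1/2) * c))
          * Real.exp (-(1/2) * ((z - (m + u0)) ⬝ᵥ M *ᵥ (z - (m + u0)))) := by
        congr 1; funext z
        rw [gaussPdf, gaussPdf]
        rw [mul_mul_mul_comm, ← Real.exp_add]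
        have := hsq z
        rw [show -(1/2 : ℝ) * ((z - m) ⬝ᵥ K⁻¹ *ᵥ (z - m))
              + -(1/2) * ((y - (A *ᵥ z + b)) ⬝ᵥ Sg⁻¹ *ᵥ (y - (A *ᵥ z + b)))
            = -(1/2) * (((z - m) ⬝ᵥ K⁻¹ *ᵥ (z - m))
              + ((y - (A *ᵥ z + b)) ⬝ᵥ Sg⁻¹ *ᵥ (y - (A *ᵥ z + b)))) from by ring, this]
        rw [show -(1/2:ℝ) * ((z - (m + u0)) ⬝ᵥ M *ᵥ (z - (m + u0)) + c)
            = -(1/2) * ((z - (m + u0)) ⬝ᵥ M *ᵥ (z - (m + u0))) + -(1/2) * c from by ring,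
          Real.exp_add]
        ring
    _ = ((2 * Real.pi) ^ (-(Fintype.card κ : ℝ) / 2) * K.det ^ (-(1:ℝ) / 2)
            * ((2 * Real.pi) ^ (-(Fintype.card ι : ℝ) / 2) * Sg.det ^ (-(1:ℝ) / 2))
            * Real.exp (-(1/2) * c))
          * ((2 * Real.pi) ^ ((Fintype.card κ : ℝ) / 2) * M.det ^ (-(1:ℝ) / 2)) := by
        rw [MeasureTheory.integral_const_mul]
        congr 1
        have h' : (∫ a : κ → ℝ, Real.exp (-(1/2) * ((a - (m + u0)) ⬝ᵥ M *ᵥ (a - (m + u0)))))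
            = ∫ v : κ → ℝ, Real.exp (-(1/2) * (v ⬝ᵥ M *ᵥ v)) :=
          MeasureTheory.integral_sub_right_eq_self
            (fun v : κ → ℝ => Real.exp (-(1/2) * (v ⬝ᵥ M *ᵥ v))) (m + u0)
        rw [h', hiq.1]
    _ = gaussPdf (A *ᵥ m + b) (Sg + A * K * Aᵀ) y := by
        rw [gaussPdf, ← hrdef, ← hcdef]
        have h2pi : (0:ℝ) < 2 * Real.pi := by positivity
        have hrw : (Sg + A * K * Aᵀ).det ^ (-(1:ℝ)/2)
            = Sg.det ^ (-(1:ℝ)/2) * (M.det ^ (-(1:ℝ)/2) * K.det ^ (-(1:ℝ)/2)) := by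
          rw [hdet, Real.mul_rpow hSg.det_pos.le (mul_nonneg hM.det_pos.le hK.det_pos.le),
            Real.mul_rpow hM.det_pos.le hK.det_pos.le]
        have hpi : (2 * Real.pi) ^ (-(Fintype.card κ : ℝ) / 2)
            * (2 * Real.pi) ^ ((Fintype.card κ : ℝ) / 2) = 1 := by
          rw [← Real.rpow_add h2pi, neg_div, neg_add_cancel, Real.rpow_zero]
        rw [hrw]
        linear_combination (K.det ^ (-(1:ℝ)/2) * (2*Real.pi) ^ (-(Fintype.card ι:ℝ)/2)
          * Sg.det ^ (-(1:ℝ)/2) * Real.exp (-(1/2)*c) * M.det ^ (-(1:ℝ)/2)) * hpi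
  done


end Aux

lemma totCov_quad {d N : ℕ} (Sobs Cm : Matrix (Fin d) (Fin d) ℝ) (u : Fin d × Fin N → ℝ) :
    u ⬝ᵥ (totCov N Sobs Cm) *ᵥ u
      = (fun i => ∑ j, u (i, j)) ⬝ᵥ Cm *ᵥ (fun i => ∑ j, u (i, j))
        + ∑ j, (fun i => u (i, j)) ⬝ᵥ Sobs *ᵥ (fun i => u (i, j)) := by
  simp only [totCov, Matrix.add_mulVec, dotProduct_add]
  congr 1
  · simp only [Matrix.mulVec, dotProduct, Matrix.kroneckerMap_apply, Matrix.of_apply]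
    rw [Fintype.sum_prod_type]
    have hinner : ∀ i : Fin d, (∑ y : Fin d × Fin N, Cm i y.1 * 1 * u y)
        = ∑ i', Cm i i' * ∑ j', u (i', j') := by
      intro i
      rw [Fintype.sum_prod_type]
      refine Finset.sum_congr rfl fun i' _ => ?_
      rw [Finset.mul_sum]
      exact Finset.sum_congr rfl fun j' _ => by ring
    calc ∑ i, ∑ j, u (i, j) * ∑ y : Fin d × Fin N, Cm i y.1 * 1 * u y
        = ∑ i, ∑ j, u (i, j) * ∑ i', Cm i i' * ∑ j', u (i', j') := by
          exact Finset.sum_congr rfl fun i _ => Finset.sum_congr rfl fun j _ => by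
            rw [hinner i]
      _ = ∑ i, (∑ j, u (i, j)) * ∑ i', Cm i i' * ∑ j', u (i', j') := by
          exact Finset.sum_congr rfl fun i _ => by rw [Finset.sum_mul]
  · simp only [Matrix.mulVec, dotProduct, Matrix.kroneckerMap_apply, Matrix.one_apply]
    rw [Fintype.sum_prod_type]
    have hinner : ∀ (i : Fin d) (j : Fin N),
        (∑ y : Fin d × Fin N, Sobs i y.1 * (if j = y.2 then (1:ℝ) else 0) * u y)
          = ∑ i', Sobs i i' * u (i', j) := by
      intro i j
      rw [Fintype.sum_prod_type]
      refine Finset.sum_congr rfl fun i' _ => ?_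
      simp [mul_ite, mul_one, mul_zero, ite_mul, zero_mul]
    calc ∑ i, ∑ j, u (i, j) * ∑ y : Fin d × Fin N, Sobs i y.1 * (if j = y.2 then (1:ℝ) else 0) * u y
        = ∑ i, ∑ j, u (i, j) * ∑ i', Sobs i i' * u (i', j) := by
          exact Finset.sum_congr rfl fun i _ => Finset.sum_congr rfl fun j _ => by
            rw [hinner i j]
      _ = ∑ j, ∑ i, u (i, j) * ∑ i', Sobs i i' * u (i', j) := Finset.sum_comm

lemma totCov_posDef {d N : ℕ} {Sobs Cm : Matrix (Fin d) (Fin d) ℝ}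
    (hS : Sobs.PosDef) (hC : Cm.PosSemidef) : (totCov N Sobs Cm).PosDef := by
  have herm : (totCov N Sobs Cm).IsHermitian := by
    ext ⟨i, j⟩ ⟨i', j'⟩
    simp only [totCov, Matrix.conjTranspose_apply, Matrix.add_apply,
      Matrix.kroneckerMap_apply, Matrix.of_apply, Matrix.one_apply, star_trivial]
    have h1 : Cm i' i = Cm i i' := by
      have := congrFun (congrFun hC.isHermitian i) i'
      simpa using this
    have h2 : Sobs i' i = Sobs i i' := by
      have := congrFun (congrFun hS.isHermitian i) i'
      simpa using this
    rw [h1, h2]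
    by_cases h : j = j' <;> simp [h, eq_comm]
  refine Matrix.PosDef.of_dotProduct_mulVec_pos herm fun v hv => ?_
  rw [show star v = v from by simp, totCov_quad]
  have h1 : 0 ≤ (fun i => ∑ j, v (i, j)) ⬝ᵥ Cm *ᵥ (fun i => ∑ j, v (i, j)) := by
    simpa using hC.dotProduct_mulVec_nonneg (fun i => ∑ j, v (i, j))
  have h2 : 0 < ∑ j, (fun i => v (i, j)) ⬝ᵥ Sobs *ᵥ (fun i => v (i, j)) := by
    obtain ⟨⟨i0, j0⟩, hq⟩ := Function.ne_iff.1 hv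
    refine Finset.sum_pos' (fun j _ => ?_) ⟨j0, Finset.mem_univ _, ?_⟩
    · simpa using hS.posSemidef.dotProduct_mulVec_nonneg (fun i => v (i, j))
    · have hvj : (fun i => v (i, j0)) ≠ 0 := by
        intro hcon
        exact hq (by simpa using congrFun hcon i0)
      simpa using hS.dotProduct_mulVec_pos hvj
  linarith


/-- The `Nd × d` matrix which repeats `B` vertically `N` times. -/
def Arep {d : ℕ} (N : ℕ) (B : Matrix (Fin d) (Fin d) ℝ) : Matrix (Fin d × Fin N) (Fin d) ℝ :=
  Matrix.of fun q i => B q.1 i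

lemma repVec_meanUpd_affine {p d N : ℕ}
    (mn : (Fin p → ℝ) → (Fin d → ℝ))
    (k : (Fin p → ℝ) → (Fin p → ℝ) → Matrix (Fin d) (Fin d) ℝ)
    (xs x : Fin p → ℝ) (z : Fin d → ℝ) :
    repVec N (meanUpd mn k xs x z)
      = (Arep N (k xs x * (k x x)⁻¹)) *ᵥ z
          + repVec N (mn xs - (k xs x * (k x x)⁻¹) *ᵥ mn x) := by
  funext q
  simp only [repVec, meanUpd, Arep, Pi.add_apply, Pi.sub_apply, Matrix.mulVec,
    dotProduct, Matrix.of_apply, Pi.sub_apply]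
  rw [show (∑ i, (k xs x * (k x x)⁻¹) q.1 i * (z i - mn x i))
      = ∑ i, (k xs x * (k x x)⁻¹) q.1 i * z i - ∑ i, (k xs x * (k x x)⁻¹) q.1 i * mn x i from by
    rw [← Finset.sum_sub_distrib]; exact Finset.sum_congr rfl fun i _ => by ring]
  ring

lemma Arep_mulVec_mean {p d N : ℕ}
    (mn : (Fin p → ℝ) → (Fin d → ℝ))
    (B : Matrix (Fin d) (Fin d) ℝ) (xs x : Fin p → ℝ) :
    (Arep N B) *ᵥ mn x + repVec N (mn xs - B *ᵥ mn x) = repVec N (mn xs) := by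
  funext q
  simp only [Arep, repVec, Pi.add_apply, Pi.sub_apply, Matrix.mulVec, dotProduct,
    Matrix.of_apply]
  ring

lemma Arep_cov {d N : ℕ} (B K : Matrix (Fin d) (Fin d) ℝ) (Cm Sobs : Matrix (Fin d) (Fin d) ℝ) :
    totCov N Sobs Cm + Arep N B * K * (Arep N B)ᵀ = totCov N Sobs (Cm + B * K * Bᵀ) := by
  ext q q'
  simp only [totCov, Matrix.add_apply, Matrix.kroneckerMap_apply, Matrix.of_apply,
    Matrix.mul_apply, Matrix.transpose_apply, Arep, Matrix.one_apply]
  ring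



section GaussAux
variable {ι : Type*} [Fintype ι] [DecidableEq ι]

lemma gaussPdf_nonneg {m : ι → ℝ} {S : Matrix ι ι ℝ} (hdet : 0 ≤ S.det) (z : ι → ℝ) :
    0 ≤ gaussPdf m S z := by
  unfold gaussPdf
  have h1 : (0:ℝ) ≤ (2 * Real.pi) ^ (-(Fintype.card ι : ℝ) / 2) :=
    Real.rpow_nonneg (by positivity) _
  have h2 : (0:ℝ) ≤ S.det ^ (-(1:ℝ) / 2) := Real.rpow_nonneg hdet _
  positivity

lemma gaussPdf_le_bound {m : ι → ℝ} {S : Matrix ι ι ℝ} (hS : S.PosDef) (z : ι → ℝ) :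
    gaussPdf m S z ≤ (2 * Real.pi) ^ (-(Fintype.card ι : ℝ) / 2) * S.det ^ (-(1:ℝ) / 2) := by
  unfold gaussPdf
  have h1 : (0:ℝ) ≤ (2 * Real.pi) ^ (-(Fintype.card ι : ℝ) / 2) * S.det ^ (-(1:ℝ) / 2) := by
    have := Real.rpow_nonneg (le_of_lt hS.det_pos) (-(1:ℝ)/2)
    have := Real.rpow_nonneg (show (0:ℝ) ≤ 2 * Real.pi by positivity) (-(Fintype.card ι : ℝ)/2)
    positivity
  have h2 : Real.exp (-(1 / 2) * ((z - m) ⬝ᵥ S⁻¹ *ᵥ (z - m))) ≤ 1 := by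
    rw [Real.exp_le_one_iff]
    have hq : 0 ≤ (z - m) ⬝ᵥ S⁻¹ *ᵥ (z - m) := by
      simpa using hS.inv.posSemidef.dotProduct_mulVec_nonneg (z - m)
    linarith
  calc (2 * Real.pi) ^ (-(Fintype.card ι : ℝ) / 2) * S.det ^ (-(1:ℝ) / 2)
        * Real.exp (-(1 / 2) * ((z - m) ⬝ᵥ S⁻¹ *ᵥ (z - m)))
      ≤ (2 * Real.pi) ^ (-(Fintype.card ι : ℝ) / 2) * S.det ^ (-(1:ℝ) / 2) * 1 :=
        mul_le_mul_of_nonneg_left h2 h1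
    _ = _ := by ring

lemma continuous_gaussPdf {γ : Type*} [TopologicalSpace γ]
    {m : γ → ι → ℝ} {S : γ → Matrix ι ι ℝ} {z : γ → ι → ℝ}
    (hm : Continuous m) (hS : Continuous S) (hz : Continuous z)
    (hdet : ∀ g, (S g).det ≠ 0) :
    Continuous fun g => gaussPdf (m g) (S g) (z g) := by
  unfold gaussPdf
  have hdc : Continuous fun g => (S g).det := hS.matrix_det
  have hinv : Continuous fun g => (S g)⁻¹ := by
    simp only [Matrix.inv_def, Ring.inverse_eq_inv']
    exact (hdc.inv₀ hdet).smul hS.matrix_adjugate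
  have hsub : Continuous fun g => z g - m g := hz.sub hm
  have hquad : Continuous fun g => (z g - m g) ⬝ᵥ (S g)⁻¹ *ᵥ (z g - m g) :=
    hsub.dotProduct (hinv.matrix_mulVec hsub)
  exact (continuous_const.mul (hdc.rpow_const fun g => Or.inl (hdet g))).mul
    (Real.continuous_exp.comp (continuous_const.mul hquad))

lemma gaussPdf_integrable {m : ι → ℝ} {S : Matrix ι ι ℝ} (hS : S.PosDef) :
    Integrable (fun z : ι → ℝ => gaussPdf m S z) := by
  unfold gaussPdf
  have h := (integral_exp_quad hS.inv).2
  have h2 : Integrable (fun z : ι → ℝ =>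
      Real.exp (-(1/2) * ((z - m) ⬝ᵥ S⁻¹ *ᵥ (z - m)))) := h.comp_sub_right m
  exact h2.const_mul _

end GaussAux

/-- supermartingale property of `D`: for any design point `x`, the
conditional expectation `E_{n,x}[D(ν_{n+1})] = F_n(x)`, given by the expectation over
`z_{n+1} ~ N(m_n(x), C_n(x))` of the updated functional, is at most
`D(ν_n) = ∫ det(C_n(x*)) L_n(y|x*) p(x*) dx*`. -/
theorem ipsur_D_supermartingale_property {p d N : ℕ}
    (X : Set (Fin p → ℝ)) (hX : IsCompact X)
    (mn : (Fin p → ℝ) → (Fin d → ℝ))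
    (k : (Fin p → ℝ) → (Fin p → ℝ) → Matrix (Fin d) (Fin d) ℝ)
    (hmc : Continuous mn)
    (hkc : Continuous fun q : (Fin p → ℝ) × (Fin p → ℝ) => k q.1 q.2)
    (hkPD : ∀ x, (k x x).PosDef)
    (hksym : ∀ x x', k x' x = (k x x')ᵀ)
    (hkSchur : ∀ x xs, (covUpd k xs x).PosSemidef)
    (Sobs : Matrix (Fin d) (Fin d) ℝ) (hSobs : Sobs.PosDef)
    (y : Fin d × Fin N → ℝ)
    (pr : (Fin p → ℝ) → ℝ) (hprc : Continuous pr) (hprnn : ∀ x, 0 ≤ pr x) :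
    ∀ x ∈ X,
      (∫ z : Fin d → ℝ,
        gaussPdf (mn x) (k x x) z *
          ∫ xs in X, (covUpd k xs x).det *
            gaussPdf (repVec N (meanUpd mn k xs x z)) (totCov N Sobs (covUpd k xs x)) y
              * pr xs)
      ≤ ∫ xs in X, (k xs xs).det *
          gaussPdf (repVec N (mn xs)) (totCov N Sobs (k xs xs)) y * pr xs := by
  intro x hx
  classical
  rcases X.eq_empty_or_nonempty with rfl | hne
  · simp
  -- notation
  set g : (Fin d → ℝ) → ℝ := gaussPdf (mn x) (k x x) with hgdef
  set q : (Fin p → ℝ) → (Fin d → ℝ) → ℝ := fun xs z =>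
    (covUpd k xs x).det *
      gaussPdf (repVec N (meanUpd mn k xs x z)) (totCov N Sobs (covUpd k xs x)) y * pr xs
    with hqdef
  have hXm : MeasurableSet X := hX.isClosed.measurableSet
  -- basic positivity facts
  have hkxxPD : (k x x).PosDef := hkPD x
  have hcovPSD : ∀ xs, (covUpd k xs x).PosSemidef := fun xs => hkSchur x xs
  have hTotPD : ∀ xs, (totCov N Sobs (covUpd k xs x)).PosDef :=
    fun xs => totCov_posDef hSobs (hcovPSD xs)
  have hTotPD2 : ∀ xs, (totCov N Sobs (k xs xs)).PosDef :=
    fun xs => totCov_posDef hSobs (hkPD xs).posSemidef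
  have hgc : Continuous g :=
    continuous_gaussPdf continuous_const continuous_const continuous_id
      (fun _ => hkxxPD.det_pos.ne')
  have hgint : Integrable g := gaussPdf_integrable hkxxPD
  have hgnn : ∀ z, 0 ≤ g z := fun z => gaussPdf_nonneg hkxxPD.det_pos.le z
  -- continuity of parameter families
  have ckxx : Continuous fun xs : Fin p → ℝ => k xs xs :=
    hkc.comp (continuous_id.prodMk continuous_id)
  have ckxsx : Continuous fun xs : Fin p → ℝ => k xs x :=
    hkc.comp (continuous_id.prodMk continuous_const)
  have ccov : Continuous fun xs : Fin p → ℝ => covUpd k xs x := by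
    unfold covUpd
    exact ckxx.sub ((ckxsx.matrix_mul continuous_const).matrix_mul ckxsx.matrix_transpose)
  have ctotOf : ∀ {C : (Fin p → ℝ) → Matrix (Fin d) (Fin d) ℝ}, Continuous C →
      Continuous fun xs => totCov N Sobs (C xs) := by
    intro C hC
    apply continuous_matrix
    intro qq qq'
    simp only [totCov, Matrix.add_apply, Matrix.kroneckerMap_apply, Matrix.of_apply]
    exact (((continuous_apply qq'.1).comp ((continuous_apply qq.1).comp hC)).mul
      continuous_const).add continuous_const
  have ctot : Continuous fun xs => totCov N Sobs (covUpd k xs x) := ctotOf ccov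
  have ctot2 : Continuous fun xs => totCov N Sobs (k xs xs) := ctotOf ckxx
  -- joint continuity of q
  have hmean : Continuous fun zp : (Fin d → ℝ) × (Fin p → ℝ) =>
      meanUpd mn k zp.2 x zp.1 := by
    unfold meanUpd
    exact (hmc.comp continuous_snd).add
      (((ckxsx.comp continuous_snd).matrix_mul continuous_const).matrix_mulVec
        (continuous_fst.sub continuous_const))
  have hrep : Continuous fun zp : (Fin d → ℝ) × (Fin p → ℝ) =>
      repVec N (meanUpd mn k zp.2 x zp.1) := by
    apply continuous_pi
    intro qq
    exact (continuous_apply qq.1).comp hmean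
  have hQc : Continuous fun zp : (Fin d → ℝ) × (Fin p → ℝ) => q zp.2 zp.1 := by
    rw [hqdef]
    refine ((((ccov.comp continuous_snd).matrix_det).mul ?_).mul (hprc.comp continuous_snd))
    exact continuous_gaussPdf hrep (ctot.comp continuous_snd) continuous_const
      (fun zp => (hTotPD zp.2).det_pos.ne')
  -- bounds on q
  have hGb : ∀ xs z, gaussPdf (repVec N (meanUpd mn k xs x z)) (totCov N Sobs (covUpd k xs x)) y
      ≤ (2 * Real.pi) ^ (-(Fintype.card (Fin d × Fin N) : ℝ) / 2)
        * (totCov N Sobs (covUpd k xs x)).det ^ (-(1:ℝ) / 2) :=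
    fun xs z => gaussPdf_le_bound (hTotPD xs) y
  set BX : (Fin p → ℝ) → ℝ := fun xs =>
    (covUpd k xs x).det * ((2 * Real.pi) ^ (-(Fintype.card (Fin d × Fin N) : ℝ) / 2)
      * (totCov N Sobs (covUpd k xs x)).det ^ (-(1:ℝ) / 2)) * pr xs with hBXdef
  have hqb : ∀ xs z, q xs z ≤ BX xs := by
    intro xs z
    rw [hqdef, hBXdef]
    have h1 := hGb xs z
    have h2 : 0 ≤ (covUpd k xs x).det := psd_det_nonneg' (hcovPSD xs)
    exact mul_le_mul_of_nonneg_right (mul_le_mul_of_nonneg_left h1 h2) (hprnn xs)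
  have hqnn : ∀ xs z, 0 ≤ q xs z := by
    intro xs z
    rw [hqdef]
    exact mul_nonneg (mul_nonneg (psd_det_nonneg' (hcovPSD xs))
      (gaussPdf_nonneg (hTotPD xs).det_pos.le y)) (hprnn xs)
  have hBXc : Continuous BX := by
    rw [hBXdef]
    refine ((ccov.matrix_det).mul (continuous_const.mul ?_)).mul hprc
    exact (ctot.matrix_det).rpow_const fun xs => Or.inl (hTotPD xs).det_pos.ne'
  obtain ⟨x0, hx0, hmaxx0⟩ := hX.exists_isMaxOn hne hBXc.continuousOn
  have hmaxx : ∀ xs ∈ X, BX xs ≤ BX x0 := fun xs hxs => hmaxx0 hxs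
  -- a.e. membership of second coordinate
  have hae : ∀ᵐ zp ∂((volume : Measure (Fin d → ℝ)).prod
      ((volume : Measure (Fin p → ℝ)).restrict X)), zp.2 ∈ X := by
    rw [MeasureTheory.ae_iff]
    have hset : {zp : (Fin d → ℝ) × (Fin p → ℝ) | ¬ zp.2 ∈ X} = Set.univ ×ˢ Xᶜ := by
      ext zp; simp
    rw [hset, MeasureTheory.Measure.prod_prod, MeasureTheory.Measure.restrict_apply hXm.compl,
      Set.compl_inter_self, measure_empty, mul_zero]
  -- integrability on the product for Fubini
  have hCint : Integrable (fun _ : Fin p → ℝ => BX x0)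
      ((volume : Measure (Fin p → ℝ)).restrict X) := by
    refine (integrable_const_iff).2 (Or.inr ?_)
    rw [isFiniteMeasure_restrict]
    exact hX.measure_lt_top.ne
  have hint2 : Integrable (Function.uncurry fun z xs => g z * q xs z)
      ((volume : Measure (Fin d → ℝ)).prod ((volume : Measure (Fin p → ℝ)).restrict X)) := by
    apply Integrable.mono' (hgint.mul_prod hCint)
    · exact ((hgc.comp continuous_fst).mul hQc).aestronglyMeasurable
    · filter_upwards [hae] with zp hzp
      have h1 : 0 ≤ g zp.1 * q zp.2 zp.1 := mul_nonneg (hgnn _) (hqnn _ _)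
      rw [Function.uncurry, Real.norm_eq_abs, abs_of_nonneg h1]
      exact mul_le_mul_of_nonneg_left ((hqb zp.2 zp.1).trans (hmaxx zp.2 hzp)) (hgnn zp.1)
  -- pointwise computation of the inner integral after swapping
  have hinner : ∀ xs : Fin p → ℝ,
      (∫ z : Fin d → ℝ, g z * q xs z)
        = (covUpd k xs x).det * pr xs *
            gaussPdf (repVec N (mn xs)) (totCov N Sobs (k xs xs)) y := by
    intro xs
    have hre : ∀ z : Fin d → ℝ, g z * q xs z
        = ((covUpd k xs x).det * pr xs) *
            (gaussPdf (mn x) (k x x) z *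
              gaussPdf ((Arep N (k xs x * (k x x)⁻¹)) *ᵥ z
                  + repVec N (mn xs - (k xs x * (k x x)⁻¹) *ᵥ mn x))
                (totCov N Sobs (covUpd k xs x)) y) := by
      intro z
      simp only [hqdef, hgdef]
      rw [repVec_meanUpd_affine]
      ring
    calc (∫ z : Fin d → ℝ, g z * q xs z)
        = ∫ z : Fin d → ℝ, ((covUpd k xs x).det * pr xs) *
            (gaussPdf (mn x) (k x x) z *
              gaussPdf ((Arep N (k xs x * (k x x)⁻¹)) *ᵥ z
                  + repVec N (mn xs - (k xs x * (k x x)⁻¹) *ᵥ mn x))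
                (totCov N Sobs (covUpd k xs x)) y) := by
          congr 1; funext z; exact hre z
      _ = ((covUpd k xs x).det * pr xs) *
            ∫ z : Fin d → ℝ, gaussPdf (mn x) (k x x) z *
              gaussPdf ((Arep N (k xs x * (k x x)⁻¹)) *ᵥ z
                  + repVec N (mn xs - (k xs x * (k x x)⁻¹) *ᵥ mn x))
                (totCov N Sobs (covUpd k xs x)) y := MeasureTheory.integral_const_mul _ _
      _ = ((covUpd k xs x).det * pr xs) *
            gaussPdf ((Arep N (k xs x * (k x x)⁻¹)) *ᵥ mn x
                + repVec N (mn xs - (k xs x * (k x x)⁻¹) *ᵥ mn x))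
              (totCov N Sobs (covUpd k xs x)
                + Arep N (k xs x * (k x x)⁻¹) * (k x x) * (Arep N (k xs x * (k x x)⁻¹))ᵀ) y := by
          rw [gauss_conv hkxxPD (hTotPD xs)]
      _ = (covUpd k xs x).det * pr xs *
            gaussPdf (repVec N (mn xs)) (totCov N Sobs (k xs xs)) y := by
          rw [Arep_mulVec_mean, Arep_cov]
          congr 3
          -- covUpd + B * kxx * Bᵀ = k xs xs
          have hu : IsUnit (k x x).det := hkxxPD.det_pos.ne'.isUnit
          have h1 : (k xs x * (k x x)⁻¹) * (k x x) * (k xs x * (k x x)⁻¹)ᵀ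
              = k xs x * (k x x)⁻¹ * (k xs x)ᵀ := by
            rw [Matrix.transpose_mul, Matrix.transpose_nonsing_inv,
              herm_transpose0 hkxxPD.isHermitian,
              Matrix.nonsing_inv_mul_cancel_right _ _ hu, Matrix.mul_assoc]
          rw [h1, covUpd, sub_add_cancel]
  -- determinant comparison
  have hdetle : ∀ xs, (covUpd k xs x).det ≤ (k xs xs).det := by
    intro xs
    refine det_le_det_of_loewner (hcovPSD xs) (hkPD xs) ?_
    have h1 : k xs xs - covUpd k xs x = k xs x * (k x x)⁻¹ * (k xs x)ᵀ := by
      rw [covUpd, sub_sub_cancel]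
    rw [h1]
    have := hkxxPD.inv.posSemidef.mul_mul_conjTranspose_same (k xs x)
    rwa [Matrix.conjTranspose_eq_transpose_of_trivial] at this
  -- integrability over X of both sides
  have hGc2 : Continuous fun xs =>
      gaussPdf (repVec N (mn xs)) (totCov N Sobs (k xs xs)) y := by
    refine continuous_gaussPdf ?_ ctot2 continuous_const (fun xs => (hTotPD2 xs).det_pos.ne')
    exact continuous_pi fun qq => (continuous_apply qq.1).comp hmc
  have hf1int : IntegrableOn (fun xs => (covUpd k xs x).det * pr xs *
      gaussPdf (repVec N (mn xs)) (totCov N Sobs (k xs xs)) y) X volume :=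
    ContinuousOn.integrableOn_compact hX
      (((ccov.matrix_det.mul hprc).mul hGc2)).continuousOn
  have hf2int : IntegrableOn (fun xs => (k xs xs).det *
      gaussPdf (repVec N (mn xs)) (totCov N Sobs (k xs xs)) y * pr xs) X volume :=
    ContinuousOn.integrableOn_compact hX
      (((ckxx.matrix_det.mul hGc2).mul hprc)).continuousOn
  -- main chain
  calc (∫ z : Fin d → ℝ, g z * ∫ xs in X, q xs z)
      = ∫ z : Fin d → ℝ, ∫ xs in X, g z * q xs z := by
        congr 1; funext z
        exact (MeasureTheory.integral_const_mul (g z) _).symm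
    _ = ∫ xs in X, ∫ z : Fin d → ℝ, g z * q xs z := integral_integral_swap hint2
    _ = ∫ xs in X, (covUpd k xs x).det * pr xs *
          gaussPdf (repVec N (mn xs)) (totCov N Sobs (k xs xs)) y := by
        exact MeasureTheory.integral_congr_ae
          (Filter.Eventually.of_forall fun xs => hinner xs)
    _ ≤ ∫ xs in X, (k xs xs).det *
          gaussPdf (repVec N (mn xs)) (totCov N Sobs (k xs xs)) y * pr xs := by
        refine setIntegral_mono_on hf1int hf2int hXm fun xs _ => ?_
        have hGnn : 0 ≤ gaussPdf (repVec N (mn xs)) (totCov N Sobs (k xs xs)) y :=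
          gaussPdf_nonneg (hTotPD2 xs).det_pos.le y
        calc (covUpd k xs x).det * pr xs *
              gaussPdf (repVec N (mn xs)) (totCov N Sobs (k xs xs)) y
            ≤ (k xs xs).det * pr xs *
              gaussPdf (repVec N (mn xs)) (totCov N Sobs (k xs xs)) y :=
              mul_le_mul_of_nonneg_right
                (mul_le_mul_of_nonneg_right (hdetle xs) (hprnn xs)) hGnn
          _ = (k xs xs).det *
              gaussPdf (repVec N (mn xs)) (totCov N Sobs (k xs xs)) y * pr xs := by ring
end

section
/- Let H and G be nonnegative functionals on Gaussian measures with H having the supermartingale property and G(ν) = sup_{x∈X} (H(ν) - J_x(ν)) where J_x(ν) = E_{z(x)}[H(ν|(x,z(x)))]. Suppose (x_n) is a SUR sequential design for H, that the zero sets of H and G coincide, and that H(ν_n) → H(ν_∞) and G(ν_n) → G(ν_∞) almost surely, where ν_∞ is the almost-sure limit Gaussian measure. Then H(ν_n) → 0 almost surely. -/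
open MeasureTheory Filter

/-- SUR convergence theorem: let `H, G` be nonnegative functionals on
(Gaussian) measures, `H` having the supermartingale property along the design, and
`G(ν) = ⨆_{x ∈ X} (H(ν) - J_x(ν))` where `J_x(ν) = E_{z(x)}[H(ν|(x,z(x)))]`.  Suppose
`(x_n)` is a SUR sequential design for `H` (i.e. `x_{n+1}` minimizes `x ↦ J_x(ν_n)`, and
`J_{x_{n+1}}(ν_n)` is a version of `E_{n}[H(ν_{n+1})]`), that the zero sets of `H` and `G`
coincide, and that `H(ν_n) → H(ν_∞)` and `G(ν_n) → G(ν_∞)` a.s.  Then `H(ν_n) → 0` a.s. -/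
theorem sur_convergence
    {Ω : Type*} {mΩ : MeasurableSpace Ω} {P : Measure Ω} [IsProbabilityMeasure P]
    (F : Filtration ℕ mΩ)
    {M X : Type*} [Nonempty X]
    (H G : M → ℝ) (J : X → M → ℝ)
    (ν : ℕ → Ω → M) (νinf : Ω → M)
    (hHnn : ∀ μ : M, 0 ≤ H μ) (hGnn : ∀ μ : M, 0 ≤ G μ)
    (hGdef : ∀ μ : M, G μ = ⨆ x : X, (H μ - J x μ))
    (hSuper : Supermartingale (fun n ω => H (ν n ω)) F P)
    (ξ : ℕ → Ω → X)
    (hSUR : ∀ n ω x, J (ξ n ω) (ν n ω) ≤ J x (ν n ω))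
    (hCond : ∀ n, (fun ω => J (ξ n ω) (ν n ω)) =ᵐ[P] P[fun ω => H (ν (n + 1) ω)|F n])
    (hZero : ∀ μ : M, H μ = 0 ↔ G μ = 0)
    (hHconv : ∀ᵐ ω ∂P, Tendsto (fun n => H (ν n ω)) atTop (nhds (H (νinf ω))))
    (hGconv : ∀ᵐ ω ∂P, Tendsto (fun n => G (ν n ω)) atTop (nhds (G (νinf ω)))) :
    ∀ᵐ ω ∂P, Tendsto (fun n => H (ν n ω)) atTop (nhds 0) := by
  classical
  -- pointwise formula for G along the design
  have hGeq : ∀ n ω, G (ν n ω) = H (ν n ω) - J (ξ n ω) (ν n ω) := by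
    intro n ω
    rw [hGdef]
    refine le_antisymm (ciSup_le fun x => sub_le_sub_left (hSUR n ω x) _) ?_
    exact le_ciSup ⟨H (ν n ω) - J (ξ n ω) (ν n ω), by
      rintro y ⟨x, rfl⟩; exact sub_le_sub_left (hSUR n ω x) _⟩ (ξ n ω)
  have hInt : ∀ n, Integrable (fun ω => H (ν n ω)) P := fun n => hSuper.integrable n
  have hGae : ∀ n, (fun ω => G (ν n ω)) =ᵐ[P]
      fun ω => H (ν n ω) - (P[fun ω => H (ν (n + 1) ω)|F n]) ω := by
    intro n
    filter_upwards [hCond n] with ω hω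
    rw [hGeq n ω, hω]
  have hGint : ∀ n, Integrable (fun ω => G (ν n ω)) P := fun n =>
    ((hInt n).sub integrable_condExp).congr (hGae n).symm
  set a : ℕ → ℝ := fun n => ∫ ω, H (ν n ω) ∂P with ha
  have hGint_eq : ∀ n, ∫ ω, G (ν n ω) ∂P = a n - a (n + 1) := by
    intro n
    rw [integral_congr_ae (hGae n), integral_sub (hInt n) integrable_condExp,
      integral_condExp (F.le n)]
  have hanti : Antitone a := by
    refine antitone_nat_of_succ_le fun n => ?_
    have h0 : 0 ≤ ∫ ω, G (ν n ω) ∂P := integral_nonneg fun ω => hGnn _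
    rw [hGint_eq n] at h0; linarith
  have hbdd : BddBelow (Set.range a) := ⟨0, by
    rintro y ⟨n, rfl⟩; exact integral_nonneg fun ω => hHnn _⟩
  have hL : Tendsto a atTop (nhds (⨅ n, a n)) := tendsto_atTop_ciInf hanti hbdd
  have hdiff : Tendsto (fun n => a n - a (n + 1)) atTop (nhds 0) := by
    have h1 : Tendsto (fun n => a (n + 1)) atTop (nhds (⨅ n, a n)) :=
      hL.comp (tendsto_add_atTop_nat 1)
    simpa using hL.sub h1
  -- pass to ENNReal
  set f : ℕ → Ω → ENNReal := fun n ω => ENNReal.ofReal (G (ν n ω)) with hf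
  have hfmeas : ∀ n, AEMeasurable (f n) P := by
    intro n
    exact ENNReal.measurable_ofReal.comp_aemeasurable
      ((((hInt n).aestronglyMeasurable.sub
        (stronglyMeasurable_condExp.mono (F.le n)).aestronglyMeasurable).congr
        (hGae n).symm).aemeasurable)
  have hlin : ∀ n, ∫⁻ ω, f n ω ∂P = ENNReal.ofReal (a n - a (n + 1)) := by
    intro n
    rw [← hGint_eq n, ← ofReal_integral_eq_lintegral_ofReal (hGint n)
      (Filter.Eventually.of_forall fun ω => hGnn _)]
  have hlinconv : Tendsto (fun n => ∫⁻ ω, f n ω ∂P) atTop (nhds 0) := by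
    simp only [hlin]
    have := (ENNReal.continuous_ofReal.tendsto 0).comp hdiff
    simpa [Function.comp_def] using this
  have hliminf : liminf (fun n => ∫⁻ ω, f n ω ∂P) atTop = 0 := hlinconv.liminf_eq
  have hfatou : ∫⁻ ω, liminf (fun n => f n ω) atTop ∂P = 0 := by
    refine le_antisymm ?_ zero_le
    calc ∫⁻ ω, liminf (fun n => f n ω) atTop ∂P
        ≤ liminf (fun n => ∫⁻ ω, f n ω ∂P) atTop := lintegral_liminf_le' hfmeas
      _ = 0 := hliminf
  have hglm : AEMeasurable (fun ω => liminf (fun n => f n ω) atTop) P := by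
    have hae : ∀ᵐ ω ∂P, ∀ n, f n ω = (hfmeas n).mk (f n) ω :=
      ae_all_iff.mpr fun n => (hfmeas n).ae_eq_mk
    refine ⟨fun ω => liminf (fun n => (hfmeas n).mk (f n) ω) atTop,
      Measurable.liminf fun n => (hfmeas n).measurable_mk, ?_⟩
    filter_upwards [hae] with ω hω
    simp only [hω]
  have hzero_ae : ∀ᵐ ω ∂P, liminf (fun n => f n ω) atTop = 0 :=
    (lintegral_eq_zero_iff' hglm).mp hfatou
  filter_upwards [hHconv, hGconv, hzero_ae] with ω hHt hGt h0
  have hGlim : liminf (fun n => f n ω) atTop = ENNReal.ofReal (G (νinf ω)) :=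
    ((ENNReal.continuous_ofReal.tendsto _).comp hGt).liminf_eq
  rw [hGlim, ENNReal.ofReal_eq_zero] at h0
  have hG0 : G (νinf ω) = 0 := le_antisymm h0 (hGnn _)
  have hH0 : H (νinf ω) = 0 := (hZero _).mpr hG0
  rwa [hH0] at hHt
end
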